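/- If a, b and p, q are pairs of distinct incident lines and the intersection (a ∇ b) ∩ (p ∇ q) contains more than one line, then a ∇ b = p ∇ q. Dually, if (a Y b) ∩ (p Y q) contains more than one line then a Y b = p Y q. -/
import Mathlib


/-!
Axiomatic projective space with lines as primary elements (Robinson,
"Projective space: lines and duality").

`perp I S` is `S^♢`, the set of lines incident to every line of `S`;
`lineSig I a b` is `Σ(a,b) = {a,b}^♢ \ {a,b}^♢♢`, the lines that belong to a
skew pair in `[a b]`.
-/

namespace PSLD

variable {L : Type*}

/-- `S^♢`: the lines incident to every member of `S`. -/
def perp (I : L → L → Prop) (S : Set L) : Set L := {l | ∀ s ∈ S, I l s}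

/-- `Σ(a,b) = {a,b}^♢ \ {a,b}^♢♢`. -/
def lineSig (I : L → L → Prop) (a b : L) : Set L :=
  perp I {a, b} \ perp I (perp I {a, b})

/-- A triad: pairwise incident distinct lines `a, b, c` with `c ∈ Σ(a,b)`. -/
def Triad (I : L → L → Prop) (a b c : L) : Prop :=
  a ≠ b ∧ I a b ∧ c ∈ lineSig I a b

/-- A nonempty type of lines with a reflexive symmetric incidence relation
satisfying AXIOM [1], AXIOM [2.1], AXIOM [2.2], AXIOM [2.3]. -/
structure LineGeom (L : Type*) where
  /-- incidence -/
  I : L → L → Prop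
  nonempty : Nonempty L
  refl : ∀ l, I l l
  symm : ∀ a b, I a b → I b a
  /-- AXIOM [1]: each `l^♢` contains a pairwise skew triple. -/
  ax1 : ∀ l : L, ∃ x y z : L, I x l ∧ I y l ∧ I z l ∧ ¬ I x y ∧ ¬ I y z ∧ ¬ I x z
  /-- AXIOM [2.1]: for distinct incident `a, b`, `[a b]` contains a skew pair. -/
  ax21 : ∀ a b : L, a ≠ b → I a b →
    ∃ x ∈ perp I {a, b}, ∃ y ∈ perp I {a, b}, ¬ I x y
  /-- AXIOM [2.2]: for distinct incident `a, b` and `z ∈ Σ(a,b)`,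
  `[a b z]` contains no skew pair. -/
  ax22 : ∀ a b z : L, a ≠ b → I a b → z ∈ lineSig I a b →
    ∀ x ∈ perp I {a, b, z}, ∀ y ∈ perp I {a, b, z}, I x y
  /-- AXIOM [2.3]: for distinct incident `a, b` and a skew pair `x, y ∈ [a b]`,
  every line of `[a b]` is incident to `x` or to `y`. -/
  ax23 : ∀ a b x y : L, a ≠ b → I a b → x ∈ perp I {a, b} → y ∈ perp I {a, b} →
    ¬ I x y → ∀ l ∈ perp I {a, b}, I l x ∨ I l y

/-- A `LineGeom` together with a symmetric labelling `Σ_Y`, `Σ_∇` of the two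
incidence classes of each `Σ(a,b)`, the derived points `pt a b = a Y b` and
planes `pl a b = a ∇ b`, and AXIOM [3], AXIOM [4]. -/
structure LabeledLineGeom (L : Type*) extends LineGeom L where
  /-- the incidence class `Σ_Y(a,b)` -/
  SY : L → L → Set L
  /-- the incidence class `Σ_∇(a,b)` -/
  SD : L → L → Set L
  SY_symm : ∀ a b : L, SY a b = SY b a
  SD_symm : ∀ a b : L, SD a b = SD b a
  SY_union_SD : ∀ a b : L, a ≠ b → I a b → SY a b ∪ SD a b = lineSig I a b
  SY_disj_SD : ∀ a b : L, a ≠ b → I a b → SY a b ∩ SD a b = ∅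
  SY_nonempty : ∀ a b : L, a ≠ b → I a b → (SY a b).Nonempty
  SD_nonempty : ∀ a b : L, a ≠ b → I a b → (SD a b).Nonempty
  SY_incident : ∀ a b : L, a ≠ b → I a b → ∀ x ∈ SY a b, ∀ y ∈ SY a b, I x y
  SD_incident : ∀ a b : L, a ≠ b → I a b → ∀ x ∈ SD a b, ∀ y ∈ SD a b, I x y
  SY_skew_SD : ∀ a b : L, a ≠ b → I a b → ∀ x ∈ SY a b, ∀ y ∈ SD a b, ¬ I x y
  /-- the point `a Y b` -/
  pt : L → L → Set L
  /-- the plane `a ∇ b` -/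
  pl : L → L → Set L
  /-- `a Y b = [a b c]` for any `c ∈ Σ_Y(a,b)` (well-defined). -/
  pt_spec : ∀ a b c : L, a ≠ b → I a b → c ∈ SY a b → pt a b = perp I {a, b, c}
  /-- `a ∇ b = [a b c]` for any `c ∈ Σ_∇(a,b)` (well-defined). -/
  pl_spec : ∀ a b c : L, a ≠ b → I a b → c ∈ SD a b → pl a b = perp I {a, b, c}
  /-- AXIOM [3]: each triad admits a triad with disjoint perp. -/
  ax3 : ∀ a b c : L, Triad I a b c → ∃ p q r : L, Triad I p q r ∧
    perp I {a, b, c} ∩ perp I {p, q, r} = ∅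
  /-- AXIOM [4]: any two points meet; any two planes meet. -/
  ax4 : ∀ a b p q : L, a ≠ b → I a b → p ≠ q → I p q →
    (pt a b ∩ pt p q).Nonempty ∧ (pl a b ∩ pl p q).Nonempty

/-- `P` is a point: `P = a Y b` for some distinct incident lines `a, b`. -/
def IsPoint (G : LabeledLineGeom L) (P : Set L) : Prop :=
  ∃ a b : L, a ≠ b ∧ G.I a b ∧ P = G.pt a b

/-- `π` is a plane: `π = a ∇ b` for some distinct incident lines `a, b`. -/
def IsPlane (G : LabeledLineGeom L) (π : Set L) : Prop :=
  ∃ a b : L, a ≠ b ∧ G.I a b ∧ π = G.pl a b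

lemma mem_perp_triple {G : LabeledLineGeom L} {a b c l : L} :
    l ∈ perp G.I {a, b, c} ↔ G.I l a ∧ G.I l b ∧ G.I l c := by
  simp [perp]

/-- If a set of the form `[u v w]` with `w ∈ Σ(u,v)` contains two distinct
lines `x, y`, then there is `z ∈ Σ(x,y)` with `[u v w] = [x y z]`, and
this set is flat. -/
lemma flat_rebase (G : LabeledLineGeom L) (a b c x y : L)
    (hab : a ≠ b) (h1 : G.I a b) (hcl : c ∈ lineSig G.I a b) (hxy : x ≠ y)
    (hx : x ∈ perp G.I {a, b, c}) (hy : y ∈ perp G.I {a, b, c}) :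
    G.I x y ∧ ∃ z ∈ lineSig G.I x y, perp G.I {a, b, c} = perp G.I {x, y, z} := by
  have flat : ∀ u ∈ perp G.I {a, b, c}, ∀ v ∈ perp G.I {a, b, c}, G.I u v :=
    G.ax22 a b c hab h1 hcl
  have hIxy : G.I x y := flat x hx y hy
  have hca : G.I c a := hcl.1 a (by simp)
  have hcb : G.I c b := hcl.1 b (by simp)
  have ha : a ∈ perp G.I {a, b, c} :=
    mem_perp_triple.2 ⟨G.refl a, h1, G.symm c a hca⟩
  have hb : b ∈ perp G.I {a, b, c} :=
    mem_perp_triple.2 ⟨G.symm a b h1, G.refl b, G.symm c b hcb⟩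
  have hc : c ∈ perp G.I {a, b, c} :=
    mem_perp_triple.2 ⟨hca, hcb, G.refl c⟩
  refine ⟨hIxy, ?_⟩
  -- find z in the set which lies in Σ(x,y)
  have hz : ∃ z ∈ perp G.I {a, b, c}, z ∈ lineSig G.I x y := by
    by_contra h
    push_neg at h
    have key : ∀ w ∈ perp G.I {a, b, c}, w ∈ perp G.I (perp G.I {x, y}) := by
      intro w hw
      have hw1 : w ∈ perp G.I {x, y} := by
        intro s hs
        simp only [Set.mem_insert_iff, Set.mem_singleton_iff] at hs
        rcases hs with rfl | rfl
        · exact flat w hw _ hx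
        · exact flat w hw _ hy
      by_contra hcon
      exact h w hw ⟨hw1, hcon⟩
    obtain ⟨u, hu⟩ := G.SY_nonempty x y hxy hIxy
    obtain ⟨v, hv⟩ := G.SD_nonempty x y hxy hIxy
    have huls : u ∈ lineSig G.I x y := by
      rw [← G.SY_union_SD x y hxy hIxy]; exact Or.inl hu
    have hvls : v ∈ lineSig G.I x y := by
      rw [← G.SY_union_SD x y hxy hIxy]; exact Or.inr hv
    have hup : u ∈ perp G.I {a, b, c} := mem_perp_triple.2
      ⟨G.symm a u (key a ha u huls.1), G.symm b u (key b hb u huls.1),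
        G.symm c u (key c hc u huls.1)⟩
    have hvp : v ∈ perp G.I {a, b, c} := mem_perp_triple.2
      ⟨G.symm a v (key a ha v hvls.1), G.symm b v (key b hb v hvls.1),
        G.symm c v (key c hc v hvls.1)⟩
    exact G.SY_skew_SD x y hxy hIxy u hu v hv (flat u hup v hvp)
  obtain ⟨z, hzp, hzsig⟩ := hz
  refine ⟨z, hzsig, ?_⟩
  have flat2 : ∀ u ∈ perp G.I {x, y, z}, ∀ v ∈ perp G.I {x, y, z}, G.I u v :=
    G.ax22 x y z hxy hIxy hzsig
  have hax : a ∈ perp G.I {x, y, z} := mem_perp_triple.2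
    ⟨G.symm x a (flat x hx a ha), G.symm y a (flat y hy a ha),
      G.symm z a (flat z hzp a ha)⟩
  have hbx : b ∈ perp G.I {x, y, z} := mem_perp_triple.2
    ⟨G.symm x b (flat x hx b hb), G.symm y b (flat y hy b hb),
      G.symm z b (flat z hzp b hb)⟩
  have hcx : c ∈ perp G.I {x, y, z} := mem_perp_triple.2
    ⟨G.symm x c (flat x hx c hc), G.symm y c (flat y hy c hc),
      G.symm z c (flat z hzp c hc)⟩
  ext l
  constructor
  · intro hl
    exact mem_perp_triple.2 ⟨flat l hl x hx, flat l hl y hy, flat l hl z hzp⟩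
  · intro hl
    exact mem_perp_triple.2 ⟨flat2 l hl a hax, flat2 l hl b hbx, flat2 l hl c hcx⟩

/-- No point coincides (as a set `[x y z]` with `z ∈ Σ_Y(x,y)`) with a plane
`[a b c]`, `c ∈ Σ_∇(a,b)`: consequence of AX3 and AX4. -/
lemma not_pt_eq_pl (G : LabeledLineGeom L) (a b x y z : L)
    (hab : a ≠ b) (h1 : G.I a b) (hxy : x ≠ y) (hIxy : G.I x y)
    (hzY : z ∈ G.SY x y) (hE : G.pl a b = perp G.I {x, y, z}) : False := by
  have hzsig : z ∈ lineSig G.I x y := by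
    rw [← G.SY_union_SD x y hxy hIxy]; exact Or.inl hzY
  obtain ⟨p', q', r', htr', hdisj⟩ := G.ax3 x y z ⟨hxy, hIxy, hzsig⟩
  obtain ⟨hp'q', hIp'q', hr'⟩ := htr'
  rw [← G.SY_union_SD p' q' hp'q' hIp'q'] at hr'
  rcases hr' with hr' | hr'
  · -- point case : use points x Y y and p' Y q'
    obtain ⟨w, hw1, hw2⟩ := (G.ax4 x y p' q' hxy hIxy hp'q' hIp'q').1
    rw [G.pt_spec x y z hxy hIxy hzY] at hw1
    rw [G.pt_spec p' q' r' hp'q' hIp'q' hr'] at hw2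
    exact absurd hdisj (by rw [Set.eq_empty_iff_forall_notMem]; push_neg
                           exact ⟨w, hw1, hw2⟩)
  · -- plane case : use planes a ∇ b and p' ∇ q'
    obtain ⟨w, hw1, hw2⟩ := (G.ax4 a b p' q' hab h1 hp'q' hIp'q').2
    rw [hE] at hw1
    rw [G.pl_spec p' q' r' hp'q' hIp'q' hr'] at hw2
    exact absurd hdisj (by rw [Set.eq_empty_iff_forall_notMem]; push_neg
                           exact ⟨w, hw1, hw2⟩)

/-- Dual of `not_pt_eq_pl`. -/
lemma not_pl_eq_pt (G : LabeledLineGeom L) (a b x y z : L)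
    (hab : a ≠ b) (h1 : G.I a b) (hxy : x ≠ y) (hIxy : G.I x y)
    (hzD : z ∈ G.SD x y) (hE : G.pt a b = perp G.I {x, y, z}) : False := by
  have hzsig : z ∈ lineSig G.I x y := by
    rw [← G.SY_union_SD x y hxy hIxy]; exact Or.inr hzD
  obtain ⟨p', q', r', htr', hdisj⟩ := G.ax3 x y z ⟨hxy, hIxy, hzsig⟩
  obtain ⟨hp'q', hIp'q', hr'⟩ := htr'
  rw [← G.SY_union_SD p' q' hp'q' hIp'q'] at hr'
  rcases hr' with hr' | hr'
  · obtain ⟨w, hw1, hw2⟩ := (G.ax4 a b p' q' hab h1 hp'q' hIp'q').1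
    rw [hE] at hw1
    rw [G.pt_spec p' q' r' hp'q' hIp'q' hr'] at hw2
    exact absurd hdisj (by rw [Set.eq_empty_iff_forall_notMem]; push_neg
                           exact ⟨w, hw1, hw2⟩)
  · obtain ⟨w, hw1, hw2⟩ := (G.ax4 x y p' q' hxy hIxy hp'q' hIp'q').2
    rw [G.pl_spec x y z hxy hIxy hzD] at hw1
    rw [G.pl_spec p' q' r' hp'q' hIp'q' hr'] at hw2
    exact absurd hdisj (by rw [Set.eq_empty_iff_forall_notMem]; push_neg
                           exact ⟨w, hw1, hw2⟩)

/-- A plane containing two distinct lines `x, y` equals `x ∇ y`. -/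
lemma pl_eq_of_mem (G : LabeledLineGeom L) (a b x y : L)
    (hab : a ≠ b) (h1 : G.I a b) (hxy : x ≠ y)
    (hx : x ∈ G.pl a b) (hy : y ∈ G.pl a b) : G.pl a b = G.pl x y := by
  obtain ⟨c, hc⟩ := G.SD_nonempty a b hab h1
  have hcl : c ∈ lineSig G.I a b := by
    rw [← G.SY_union_SD a b hab h1]; exact Or.inr hc
  have hplab : G.pl a b = perp G.I {a, b, c} := G.pl_spec a b c hab h1 hc
  rw [hplab] at hx hy
  obtain ⟨hIxy, z, hzsig, hE⟩ := flat_rebase G a b c x y hab h1 hcl hxy hx hy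
  have hz2 := hzsig
  rw [← G.SY_union_SD x y hxy hIxy] at hz2
  rcases hz2 with hz2 | hz2
  · exact absurd (hplab.trans hE) (fun h => not_pt_eq_pl G a b x y z hab h1 hxy hIxy hz2 h |>.elim)
  · rw [hplab, hE, ← G.pl_spec x y z hxy hIxy hz2]

/-- A point containing two distinct lines `x, y` equals `x Y y`. -/
lemma pt_eq_of_mem (G : LabeledLineGeom L) (a b x y : L)
    (hab : a ≠ b) (h1 : G.I a b) (hxy : x ≠ y)
    (hx : x ∈ G.pt a b) (hy : y ∈ G.pt a b) : G.pt a b = G.pt x y := by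
  obtain ⟨c, hc⟩ := G.SY_nonempty a b hab h1
  have hcl : c ∈ lineSig G.I a b := by
    rw [← G.SY_union_SD a b hab h1]; exact Or.inl hc
  have hptab : G.pt a b = perp G.I {a, b, c} := G.pt_spec a b c hab h1 hc
  rw [hptab] at hx hy
  obtain ⟨hIxy, z, hzsig, hE⟩ := flat_rebase G a b c x y hab h1 hcl hxy hx hy
  have hz2 := hzsig
  rw [← G.SY_union_SD x y hxy hIxy] at hz2
  rcases hz2 with hz2 | hz2
  · rw [hptab, hE, ← G.pt_spec x y z hxy hIxy hz2]
  · exact absurd (hptab.trans hE) (fun h => not_pl_eq_pt G a b x y z hab h1 hxy hIxy hz2 h |>.elim)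

/-- Theorem 14 (paper) and its dual: if `(a ∇ b) ∩ (p ∇ q)` contains more than
one line then `a ∇ b = p ∇ q`; if `(a Y b) ∩ (p Y q)` contains more than one
line then `a Y b = p Y q`. -/
theorem eq_of_two_common_lines (G : LabeledLineGeom L) (a b p q : L)
    (hab : a ≠ b) (h1 : G.I a b) (hpq : p ≠ q) (h2 : G.I p q) :
    ((∃ x ∈ G.pl a b ∩ G.pl p q, ∃ y ∈ G.pl a b ∩ G.pl p q, x ≠ y) →
      G.pl a b = G.pl p q) ∧
    ((∃ x ∈ G.pt a b ∩ G.pt p q, ∃ y ∈ G.pt a b ∩ G.pt p q, x ≠ y) →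
      G.pt a b = G.pt p q) := by
  constructor
  · rintro ⟨x, ⟨hx1, hx2⟩, y, ⟨hy1, hy2⟩, hxy⟩
    rw [pl_eq_of_mem G a b x y hab h1 hxy hx1 hy1,
      pl_eq_of_mem G p q x y hpq h2 hxy hx2 hy2]
  · rintro ⟨x, ⟨hx1, hx2⟩, y, ⟨hy1, hy2⟩, hxy⟩
    rw [pt_eq_of_mem G a b x y hab h1 hxy hx1 hy1,
      pt_eq_of_mem G p q x y hpq h2 hxy hx2 hy2]

end PSLD
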